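/- (Remark 8) Let τ ≥ 1. Suppose the system is (s+τ)-sparse observable, q ≥ s+τ+1, and C(q, s+τ) < 2·C(q−s, τ), and suppose the attacks satisfy supp(a_i) ⊆ Γ for all i with |Γ| = s. Then there exists r ≤ n such that for every k ≥ r−1 the state x_{k−r+1} is the unique vector z ∈ ℝ^n for which the number of sets Λ ⊆ {1,…,q} with |Λ| = s+τ and L_Λ(Y_{k,Λ} − D_Λ U_{k−1}) = z is at least C(q−s, τ). -/

import Mathlib

open Matrix

namespace SS

variable {n p q : ℕ}

/-- The matrix obtained from a matrix `M` with `q` rows by deleting the rows indexed by `S`. -/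
def dele {m' : ℕ} (M : Matrix (Fin q) (Fin m') ℝ) (S : Finset (Fin q)) :
    Matrix {i : Fin q // i ∉ S} (Fin m') ℝ :=
  fun i j => M i.1 j

/-- The vector obtained from `v ∈ ℝ^q` by deleting the entries indexed by `S`. -/
def delv (v : Fin q → ℝ) (S : Finset (Fin q)) : {i : Fin q // i ∉ S} → ℝ :=
  fun i => v i.1

/-- A trajectory of the system `x_{k+1} = A x_k + B u_k`, `y_k = C x_k + a_k`. -/
def Traj (A : Matrix (Fin n) (Fin n) ℝ) (B : Matrix (Fin n) (Fin p) ℝ)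
    (C : Matrix (Fin q) (Fin n) ℝ) (x : ℕ → Fin n → ℝ) (u : ℕ → Fin p → ℝ)
    (a y : ℕ → Fin q → ℝ) : Prop :=
  (∀ k, x (k + 1) = A *ᵥ x k + B *ᵥ u k) ∧ ∀ k, y k = C *ᵥ x k + a k

/-- The stacked matrix `[M; MA; …; MA^{r-1}]`. -/
def stack (A : Matrix (Fin n) (Fin n) ℝ) {ι : Type} (M : Matrix ι (Fin n) ℝ)
    (r : ℕ) : Matrix (Fin r × ι) (Fin n) ℝ :=
  fun i j => (M * A ^ (i.1 : ℕ)) i.2 j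

/-- The pair `(A, M)` is observable: `[M; MA; …; MA^{n-1}]` has rank `n`. -/
def Observable (A : Matrix (Fin n) (Fin n) ℝ) {ι : Type} [Fintype ι]
    (M : Matrix ι (Fin n) ℝ) : Prop :=
  (stack A M n).rank = n

/-- `s`-sparse observability: `(A, C(Γ))` is observable for every `Γ` with `|Γ| = s`. -/
def SparseObs (A : Matrix (Fin n) (Fin n) ℝ) (C : Matrix (Fin q) (Fin n) ℝ)
    (s : ℕ) : Prop :=
  ∀ Γ : Finset (Fin q), Γ.card = s → Observable A (dele C Γ)

/-- `O_S(r) = [C(S); C(S)A; …; C(S)A^{r-1}]`. -/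
def Omat (A : Matrix (Fin n) (Fin n) ℝ) (C : Matrix (Fin q) (Fin n) ℝ)
    (S : Finset (Fin q)) (r : ℕ) :
    Matrix (Fin r × {i : Fin q // i ∉ S}) (Fin n) ℝ :=
  stack A (dele C S) r

/-- `L_S = (O_S(r)ᵀ O_S(r))⁻¹ O_S(r)ᵀ`. -/
noncomputable def Lmat (A : Matrix (Fin n) (Fin n) ℝ) (C : Matrix (Fin q) (Fin n) ℝ)
    (S : Finset (Fin q)) (r : ℕ) :
    Matrix (Fin n) (Fin r × {i : Fin q // i ∉ S}) ℝ :=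
  ((Omat A C S r)ᵀ * Omat A C S r)⁻¹ * (Omat A C S r)ᵀ

/-- Stacked output `Y_{k,S} = [y_{k-r+1}(S); …; y_k(S)]`. -/
def Yvec (y : ℕ → Fin q → ℝ) (S : Finset (Fin q)) (r k : ℕ) :
    Fin r × {i : Fin q // i ∉ S} → ℝ :=
  fun i => delv (y (k + 1 - r + (i.1 : ℕ))) S i.2

/-- Stacked attack `A_{k,S} = [a_{k-r+1}(S); …; a_k(S)]`. -/
def Avec (a : ℕ → Fin q → ℝ) (S : Finset (Fin q)) (r k : ℕ) :
    Fin r × {i : Fin q // i ∉ S} → ℝ :=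
  fun i => delv (a (k + 1 - r + (i.1 : ℕ))) S i.2

/-- Stacked input `U_{k-1} = [u_{k-r+1}; …; u_{k-1}]`. -/
def Uvec (u : ℕ → Fin p → ℝ) (r k : ℕ) : Fin (r - 1) × Fin p → ℝ :=
  fun i => u (k + 1 - r + (i.1 : ℕ)) i.2

/-- Block matrix `D_S`, with `(i, j)` block `C(S) A^{i-j-1} B` for `i > j` and `0` otherwise. -/
def Dmat (A : Matrix (Fin n) (Fin n) ℝ) (B : Matrix (Fin n) (Fin p) ℝ)
    (C : Matrix (Fin q) (Fin n) ℝ) (S : Finset (Fin q)) (r : ℕ) :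
    Matrix (Fin r × {i : Fin q // i ∉ S}) (Fin (r - 1) × Fin p) ℝ :=
  fun i j =>
    if (j.1 : ℕ) < (i.1 : ℕ) then
      (dele C S * A ^ ((i.1 : ℕ) - (j.1 : ℕ) - 1) * B) i.2 j.2
    else 0

/-- The minimal `r` such that `rank O_S(r) = n`. -/
noncomputable def rmin (A : Matrix (Fin n) (Fin n) ℝ) (C : Matrix (Fin q) (Fin n) ℝ)
    (S : Finset (Fin q)) : ℕ :=
  sInf {r : ℕ | (Omat A C S r).rank = n}

/-- `b`: the maximum of `rmin` over all index sets of cardinality `s`. -/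
noncomputable def bBound (A : Matrix (Fin n) (Fin n) ℝ) (C : Matrix (Fin q) (Fin n) ℝ)
    (s : ℕ) : ℕ :=
  (Finset.powersetCard s (Finset.univ : Finset (Fin q))).sup (rmin A C)

/-- Windowed least-squares estimate `x̂_S(m) = L_S (Y_{k+m-1,S} - D_S U_{k+m-2})`. -/
noncomputable def xhat (A : Matrix (Fin n) (Fin n) ℝ) (B : Matrix (Fin n) (Fin p) ℝ)
    (C : Matrix (Fin q) (Fin n) ℝ) (u : ℕ → Fin p → ℝ) (y : ℕ → Fin q → ℝ)
    (S : Finset (Fin q)) (r k m : ℕ) : Fin n → ℝ :=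
  Lmat A C S r *ᵥ (Yvec y S r (k + m - 1) - Dmat A B C S r *ᵥ Uvec u r (k + m - 1))

/-- The filtered index families `D_ς` of Algorithm 1. -/
def Dfam (A : Matrix (Fin n) (Fin n) ℝ) (B : Matrix (Fin n) (Fin p) ℝ)
    (C : Matrix (Fin q) (Fin n) ℝ) (u : ℕ → Fin p → ℝ) (y : ℕ → Fin q → ℝ)
    (s r k : ℕ) : ℕ → Set (Finset (Fin q))
  | 0 => {Γ' : Finset (Fin q) | Γ'.card = s}
  | ς + 1 => {Γ' ∈ Dfam A B C u y s r k ς |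
      xhat A B C u y Γ' r k (ς + 2) - A *ᵥ xhat A B C u y Γ' r k (ς + 1)
        - B *ᵥ u (k + 1 - r + ς) = 0}



lemma isUnit_of_rank_eq {m : ℕ} {M : Matrix (Fin m) (Fin m) ℝ} (h : M.rank = m) :
    IsUnit M := by
  rw [← Matrix.mulVec_surjective_iff_isUnit]
  have : LinearMap.range M.mulVecLin = ⊤ := by
    apply Submodule.eq_top_of_finrank_eq
    rw [Module.finrank_pi]
    simpa [Matrix.rank] using h
  intro v
  obtain ⟨w, hw⟩ := LinearMap.range_eq_top.mp this v
  exact ⟨w, hw⟩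

lemma mulVec_sum' {α β : Type} [Fintype β] {ι : Type} (s : Finset ι)
    (M : Matrix α β ℝ) (f : ι → β → ℝ) :
    M *ᵥ (∑ i ∈ s, f i) = ∑ i ∈ s, M *ᵥ f i := by
  funext j
  simp only [mulVec, dotProduct, Finset.sum_apply, Finset.mul_sum]
  exact Finset.sum_comm

lemma Lmat_mulVec {A : Matrix (Fin n) (Fin n) ℝ} {C : Matrix (Fin q) (Fin n) ℝ}
    {S : Finset (Fin q)} {r : ℕ} (hrank : (Omat A C S r).rank = n) (v : Fin n → ℝ) :
    Lmat A C S r *ᵥ (Omat A C S r *ᵥ v) = v := by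
  have h1 : ((Omat A C S r)ᵀ * Omat A C S r).rank = n := by
    rw [Matrix.rank_transpose_mul_self]; exact hrank
  have h2 : IsUnit ((Omat A C S r)ᵀ * Omat A C S r) := isUnit_of_rank_eq h1
  rw [Lmat, mulVec_mulVec, Matrix.mul_assoc,
    Matrix.nonsing_inv_mul _ ((Matrix.isUnit_iff_isUnit_det _).mp h2), one_mulVec]

lemma traj_pow {A : Matrix (Fin n) (Fin n) ℝ} {B : Matrix (Fin n) (Fin p) ℝ}
    {x : ℕ → Fin n → ℝ} {u : ℕ → Fin p → ℝ}
    (hx : ∀ k, x (k + 1) = A *ᵥ x k + B *ᵥ u k) (k : ℕ) :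
    ∀ d : ℕ, x (k + d) =
      A ^ d *ᵥ x k + ∑ m ∈ Finset.range d, A ^ (d - 1 - m) *ᵥ (B *ᵥ u (k + m))
  | 0 => by simp
  | d + 1 => by
    have ih := traj_pow hx k d
    have hkd : k + (d + 1) = (k + d) + 1 := by ring
    rw [hkd, hx (k + d), ih, Matrix.mulVec_add, Finset.sum_range_succ]
    have hA : A *ᵥ (A ^ d *ᵥ x k) = A ^ (d + 1) *ᵥ x k := by
      rw [mulVec_mulVec, ← pow_succ']
    have hAs : A *ᵥ (∑ m ∈ Finset.range d, A ^ (d - 1 - m) *ᵥ (B *ᵥ u (k + m))) =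
        ∑ m ∈ Finset.range d, A ^ (d + 1 - 1 - m) *ᵥ (B *ᵥ u (k + m)) := by
      rw [mulVec_sum']
      refine Finset.sum_congr rfl fun m hm => ?_
      have hm' := Finset.mem_range.mp hm
      have he : d + 1 - 1 - m = (d - 1 - m) + 1 := by omega
      rw [mulVec_mulVec, he, pow_succ']
    rw [hA, hAs]
    simp only [Nat.add_sub_cancel, Nat.sub_self, pow_zero, one_mulVec]
    abel

lemma key_eq {A : Matrix (Fin n) (Fin n) ℝ} {B : Matrix (Fin n) (Fin p) ℝ}
    {C : Matrix (Fin q) (Fin n) ℝ} {x : ℕ → Fin n → ℝ} {u : ℕ → Fin p → ℝ}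
    {a y : ℕ → Fin q → ℝ} (hT : Traj A B C x u a y) (Λ : Finset (Fin q))
    (ha : ∀ i j, j ∉ Λ → a i j = 0) (r k : ℕ) (hrk : r ≤ k + 1) :
    Yvec y Λ r k - Dmat A B C Λ r *ᵥ Uvec u r k = Omat A C Λ r *ᵥ x (k + 1 - r) := by
  obtain ⟨hx, hy⟩ := hT
  funext ij
  obtain ⟨i, j⟩ := ij
  set t := k + 1 - r with ht
  have hYe : Yvec y Λ r k (i, j) = (C *ᵥ x (t + (i : ℕ))) j.1 := by
    simp only [Yvec, delv, hy, Pi.add_apply, ha _ _ j.2, add_zero]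
    rfl
  have hxe : (C *ᵥ x (t + (i : ℕ))) j.1 =
      (C *ᵥ (A ^ (i : ℕ) *ᵥ x t)) j.1 +
        ∑ m ∈ Finset.range (i : ℕ),
          (C *ᵥ (A ^ ((i : ℕ) - 1 - m) *ᵥ (B *ᵥ u (t + m)))) j.1 := by
    rw [traj_pow hx t (i : ℕ), Matrix.mulVec_add, mulVec_sum']
    simp [Finset.sum_apply]
  have hDe : (Dmat A B C Λ r *ᵥ Uvec u r k) (i, j) =
      ∑ m ∈ Finset.range (i : ℕ),
        (C *ᵥ (A ^ ((i : ℕ) - 1 - m) *ᵥ (B *ᵥ u (t + m)))) j.1 := by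
    have hi : (i : ℕ) ≤ r - 1 := by omega
    show (∑ ml : Fin (r-1) × Fin p, Dmat A B C Λ r (i, j) ml * Uvec u r k ml) = _
    rw [Fintype.sum_prod_type]
    have step1 : ∀ m : Fin (r - 1),
        (∑ l : Fin p, Dmat A B C Λ r (i, j) (m, l) * Uvec u r k (m, l)) =
        if (m : ℕ) < (i : ℕ) then
          (C *ᵥ (A ^ ((i : ℕ) - 1 - (m : ℕ)) *ᵥ (B *ᵥ u (t + (m : ℕ))))) j.1
        else 0 := by
      intro m
      by_cases hmi : (m : ℕ) < (i : ℕ)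
      · simp only [Dmat, Uvec, hmi, if_true]
        have he : (i : ℕ) - (m : ℕ) - 1 = (i : ℕ) - 1 - (m : ℕ) := by omega
        rw [he]
        calc (∑ l : Fin p, (dele C Λ * A ^ ((i : ℕ) - 1 - (m : ℕ)) * B) j l
                * u (k + 1 - r + (m : ℕ)) l)
            = ((C * A ^ ((i : ℕ) - 1 - (m : ℕ)) * B) *ᵥ u (t + (m : ℕ))) j.1 := rfl
          _ = _ := by rw [mulVec_mulVec, mulVec_mulVec]
      · simp [Dmat, hmi]
    rw [Finset.sum_congr rfl fun m _ => step1 m]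
    rw [Fin.sum_univ_eq_sum_range
      (fun m => if m < (i : ℕ) then
        (C *ᵥ (A ^ ((i : ℕ) - 1 - m) *ᵥ (B *ᵥ u (t + m)))) j.1 else 0)]
    rw [← Finset.sum_subset (Finset.range_subset_range.mpr hi)
      (fun m _ hm => by rw [if_neg (by simp at hm ⊢; omega)])]
    exact Finset.sum_congr rfl fun m hm => if_pos (Finset.mem_range.mp hm)
  have hOe : (Omat A C Λ r *ᵥ x t) (i, j) = (C *ᵥ (A ^ (i : ℕ) *ᵥ x t)) j.1 := by
    calc (Omat A C Λ r *ᵥ x t) (i, j)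
        = ((C * A ^ (i : ℕ)) *ᵥ x t) j.1 := rfl
      _ = _ := by rw [mulVec_mulVec]
  have hsub : (Yvec y Λ r k - Dmat A B C Λ r *ᵥ Uvec u r k) (i, j) =
      Yvec y Λ r k (i, j) - (Dmat A B C Λ r *ᵥ Uvec u r k) (i, j) := rfl
  rw [hsub, hYe, hxe, hDe, hOe]
  ring

/-- Remark 8: if moreover `C(q, s+τ) < 2 C(q-s, τ)`, there exists `r ≤ n` such
that for every `k ≥ r - 1` the state `x_{k-r+1}` is the unique vector `z` matched by at least
`C(q-s, τ)` sets `Λ` with `|Λ| = s + τ`. -/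
theorem unique_majority_value
    (hn : 0 < n) (hp : 0 < p) (hq : 0 < q) (s τ : ℕ) (hs : 0 < s) (hτ : 1 ≤ τ)
    (A : Matrix (Fin n) (Fin n) ℝ) (B : Matrix (Fin n) (Fin p) ℝ)
    (C : Matrix (Fin q) (Fin n) ℝ)
    (hSO : SparseObs A C (s + τ)) (hqs : s + τ + 1 ≤ q)
    (hcount : Nat.choose q (s + τ) < 2 * Nat.choose (q - s) τ)
    (x : ℕ → Fin n → ℝ) (u : ℕ → Fin p → ℝ) (a y : ℕ → Fin q → ℝ)
    (hT : Traj A B C x u a y)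
    (Γ : Finset (Fin q)) (hΓ : Γ.card = s)
    (hsupp : ∀ i, Function.support (a i) ⊆ (Γ : Set (Fin q))) :
    ∃ r ≤ n, ∀ k, r ≤ k + 1 →
      (∃ T : Finset (Finset (Fin q)), Nat.choose (q - s) τ ≤ T.card ∧
        ∀ Λ ∈ T, Λ.card = s + τ ∧
          Lmat A C Λ r *ᵥ (Yvec y Λ r k - Dmat A B C Λ r *ᵥ Uvec u r k) =
            x (k + 1 - r)) ∧
      ∀ z : Fin n → ℝ,
        (∃ T : Finset (Finset (Fin q)), Nat.choose (q - s) τ ≤ T.card ∧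
          ∀ Λ ∈ T, Λ.card = s + τ ∧
            Lmat A C Λ r *ᵥ (Yvec y Λ r k - Dmat A B C Λ r *ᵥ Uvec u r k) = z) →
        z = x (k + 1 - r) := by
  refine ⟨n, le_rfl, fun k hk => ?_⟩
  have ha : ∀ (Λ : Finset (Fin q)), Γ ⊆ Λ → ∀ i j, j ∉ Λ → a i j = 0 := by
    intro Λ hΓΛ i j hj
    by_contra h
    exact hj (hΓΛ (by exact_mod_cast hsupp i h))
  set T0 : Finset (Finset (Fin q)) := (Γᶜ.powersetCard τ).image (fun Δ => Γ ∪ Δ) with hT0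
  have hdisj : ∀ Δ ∈ Γᶜ.powersetCard τ, Disjoint Γ Δ := by
    intro Δ hΔ
    have hsubc := (Finset.mem_powersetCard.mp hΔ).1
    exact Finset.disjoint_left.mpr fun v hv hvΔ => (Finset.mem_compl.mp (hsubc hvΔ)) hv
  have hT0card : T0.card = Nat.choose (q - s) τ := by
    rw [hT0, Finset.card_image_of_injOn, Finset.card_powersetCard, Finset.card_compl,
      Fintype.card_fin, hΓ]
    intro Δ1 h1 Δ2 h2 hEq
    have hEq' : Γ ∪ Δ1 = Γ ∪ Δ2 := hEq
    rw [← Finset.union_sdiff_cancel_left (hdisj Δ1 h1),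
      ← Finset.union_sdiff_cancel_left (hdisj Δ2 h2), hEq']
  have hmem : ∀ Λ ∈ T0, Λ.card = s + τ ∧ Γ ⊆ Λ := by
    intro Λ hΛ
    obtain ⟨Δ, hΔ, rfl⟩ := Finset.mem_image.mp hΛ
    have hc := (Finset.mem_powersetCard.mp hΔ).2
    exact ⟨by rw [Finset.card_union_of_disjoint (hdisj Δ hΔ), hΓ, hc],
      Finset.subset_union_left⟩
  have hTprop : ∀ Λ ∈ T0, Λ.card = s + τ ∧
      Lmat A C Λ n *ᵥ (Yvec y Λ n k - Dmat A B C Λ n *ᵥ Uvec u n k) = x (k + 1 - n) := by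
    intro Λ hΛ
    obtain ⟨hcard, hΓΛ⟩ := hmem Λ hΛ
    refine ⟨hcard, ?_⟩
    rw [key_eq hT Λ (ha Λ hΓΛ) n k hk]
    exact Lmat_mulVec (hSO Λ hcard) _
  refine ⟨⟨T0, hT0card.ge, hTprop⟩, ?_⟩
  rintro z ⟨Tz, hTzcard, hTz⟩
  by_contra hne
  have hdisj2 : Disjoint Tz T0 := by
    rw [Finset.disjoint_left]
    intro Λ h1 h2
    exact hne ((hTz Λ h1).2.symm.trans (hTprop Λ h2).2)
  have hsub : Tz ∪ T0 ⊆ Finset.powersetCard (s + τ) Finset.univ := by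
    intro Λ hΛ
    rw [Finset.mem_powersetCard_univ]
    rcases Finset.mem_union.mp hΛ with h | h
    · exact (hTz Λ h).1
    · exact (hTprop Λ h).1
  have hle := Finset.card_le_card hsub
  rw [Finset.card_union_of_disjoint hdisj2, Finset.card_powersetCard,
    Finset.card_univ, Fintype.card_fin] at hle
  omega


end SS
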